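/- Under the stochastic proximal update with L-smooth f and η > 0, the iterates satisfy (1/2)(1/η - 2L)‖x_{t+1} - x_t‖² ≤ F(x_t) - F(x_{t+1}) + (1/(2L))‖g_t - ∇f(x_t)‖². -/

import Mathlib

/-!
Write `Δ = x₁ - x₀`. The descent lemma `f x₁ ≤ f x₀ + ⟪∇f x₀, Δ⟫ + (L/2)‖Δ‖²`, added to the
optimality of `x₁` tested against the competitor `x₀`, gives
`⟪g - ∇f x₀, Δ⟫ + (1/2)(1/η - L)‖Δ‖² ≤ F x₀ - F x₁`. Young's inequality bounds the cross term
by `(1/(2L))‖g - ∇f x₀‖² + (L/2)‖Δ‖²`, which accounts for the second `L`.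
-/

open RealInnerProductSpace Set

section InnerProductSpace

variable {E : Type*} [NormedAddCommGroup E] [InnerProductSpace ℝ E]

theorem inner_le_sq_div_add_mul_sq {L : ℝ} (hL : 0 < L) (a b : E) :
    ⟪a, b⟫ ≤ 1 / (2 * L) * ‖a‖ ^ 2 + L / 2 * ‖b‖ ^ 2 := by
  have hamgm := two_mul_le_add_mul_sq (a := ‖b‖) (b := ‖a‖) hL
  calc ⟪a, b⟫ ≤ ‖a‖ * ‖b‖ := real_inner_le_norm a b
    _ ≤ 1 / (2 * L) * ‖a‖ ^ 2 + L / 2 * ‖b‖ ^ 2 := by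
      rw [one_div, mul_inv, ← div_eq_inv_mul]
      linarith

variable [CompleteSpace E]

theorem HasGradientAt.hasDerivAt_comp_add_smul {f : E → ℝ} {f' x v : E} {t : ℝ}
    (hf : HasGradientAt f f' (x + t • v)) :
    HasDerivAt (fun s : ℝ => f (x + s • v)) ⟪f', v⟫ t := by
  have hline : HasDerivAt (fun s : ℝ => x + s • v) v t := by
    simpa using ((hasDerivAt_id t).smul_const v).const_add x
  have hcomp := hf.hasFDerivAt.comp_hasDerivAt t hline
  simp only [InnerProductSpace.toDual_apply_apply] at hcomp
  exact hcomp

theorem le_add_inner_add_sq_of_lipschitz_gradient {f : E → ℝ} {f' : E → E} {L : ℝ}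
    (hf : ∀ x, HasGradientAt f (f' x) x) {x : E} (hlip : ∀ z, ‖f' z - f' x‖ ≤ L * ‖z - x‖)
    (y : E) : f y ≤ f x + ⟪f' x, y - x⟫ + L / 2 * ‖y - x‖ ^ 2 := by
  set v := y - x
  have hderiv (t : ℝ) : HasDerivAt (fun s : ℝ => f (x + s • v)) ⟪f' (x + t • v), v⟫ t :=
    (hf _).hasDerivAt_comp_add_smul
  have hbound_deriv (t : ℝ) :
      HasDerivAt (fun s : ℝ => f x + s * ⟪f' x, v⟫ + L / 2 * s ^ 2 * ‖v‖ ^ 2)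
        (⟪f' x, v⟫ + L * t * ‖v‖ ^ 2) t := by
    refine ((((hasDerivAt_id t).mul_const ⟪f' x, v⟫).const_add (f x)).add
      (((hasDerivAt_pow 2 t).const_mul (L / 2)).mul_const (‖v‖ ^ 2))).congr_deriv ?_
    ring
  have hslope : ∀ t ∈ Ico (0 : ℝ) 1,
      ⟪f' (x + t • v), v⟫ ≤ ⟪f' x, v⟫ + L * t * ‖v‖ ^ 2 := by
    intro t ht
    calc ⟪f' (x + t • v), v⟫ = ⟪f' x, v⟫ + ⟪f' (x + t • v) - f' x, v⟫ := by
          rw [inner_sub_left]; ring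
      _ ≤ ⟪f' x, v⟫ + ‖f' (x + t • v) - f' x‖ * ‖v‖ := by
          gcongr; exact real_inner_le_norm _ _
      _ ≤ ⟪f' x, v⟫ + L * ‖t • v‖ * ‖v‖ := by
          gcongr; simpa using hlip (x + t • v)
      _ = ⟪f' x, v⟫ + L * t * ‖v‖ ^ 2 := by
          rw [norm_smul, Real.norm_of_nonneg ht.1]; ring
  have hcomparison := image_le_of_deriv_right_le_deriv_boundary
    (fun t _ => (hderiv t).continuousAt.continuousWithinAt)
    (fun t _ => (hderiv t).hasDerivWithinAt) (by simp)
    (fun t _ => (hbound_deriv t).continuousAt.continuousWithinAt)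
    (fun t _ => (hbound_deriv t).hasDerivWithinAt) hslope (right_mem_Icc.2 zero_le_one)
  simpa [v] using hcomparison

theorem prox_gradient_step_decrease {f r : E → ℝ} {f' : E → E} {L η : ℝ}
    (hf : ∀ x, HasGradientAt f (f' x) x) {g x₀ x₁ : E}
    (hlip : ∀ z, ‖f' z - f' x₀‖ ≤ L * ‖z - x₀‖)
    (hmin : ∀ x, r x₁ + ⟪g, x₁ - x₀⟫ + 1 / (2 * η) * ‖x₁ - x₀‖ ^ 2 ≤
      r x + ⟪g, x - x₀⟫ + 1 / (2 * η) * ‖x - x₀‖ ^ 2) :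
    ⟪g - f' x₀, x₁ - x₀⟫ + 1 / 2 * (1 / η - L) * ‖x₁ - x₀‖ ^ 2 ≤
      (f x₀ + r x₀) - (f x₁ + r x₁) := by
  have hsmooth := le_add_inner_add_sq_of_lipschitz_gradient hf hlip x₁
  have hprox : r x₁ + ⟪g, x₁ - x₀⟫ + 1 / (2 * η) * ‖x₁ - x₀‖ ^ 2 ≤ r x₀ := by
    simpa using hmin x₀
  rw [inner_sub_left]
  linear_combination hsmooth + hprox

end InnerProductSpace

theorem spg_decrease_with_variance_general {d : ℕ} (f r : EuclideanSpace ℝ (Fin d) → ℝ)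
    (f' : EuclideanSpace ℝ (Fin d) → EuclideanSpace ℝ (Fin d)) (L η : ℝ) (hL : 0 < L)
    (hdiff : ∀ x, HasGradientAt f (f' x) x)
    (hlip : ∀ x y, ‖f' x - f' y‖ ≤ L * ‖x - y‖)
    (g x₀ x₁ : EuclideanSpace ℝ (Fin d))
    (hmin : ∀ x, r x₁ + ⟪g, x₁ - x₀⟫ + 1 / (2 * η) * ‖x₁ - x₀‖ ^ 2 ≤
      r x + ⟪g, x - x₀⟫ + 1 / (2 * η) * ‖x - x₀‖ ^ 2) :
    1 / 2 * (1 / η - 2 * L) * ‖x₁ - x₀‖ ^ 2 ≤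
      (f x₀ + r x₀) - (f x₁ + r x₁) + 1 / (2 * L) * ‖g - f' x₀‖ ^ 2 := by
  have hdecrease := prox_gradient_step_decrease hdiff (fun z => hlip z x₀) hmin
  have hyoung := inner_le_sq_div_add_mul_sq hL (f' x₀ - g) (x₁ - x₀)
  rw [← neg_sub, inner_neg_left, norm_neg] at hyoung
  linear_combination hdecrease + hyoung

/-- Stochastic proximal update decrease with variance: if `f` is `L`-smooth and `x₁` minimizes
`x ↦ r x + ⟪g, x - x₀⟫ + (1/(2η))‖x - x₀‖²`, then
`(1/2)(1/η - 2L)‖x₁ - x₀‖² ≤ F x₀ - F x₁ + (1/(2L))‖g - ∇f x₀‖²`. -/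
theorem spg_decrease_with_variance {d : ℕ} (f r : EuclideanSpace ℝ (Fin d) → ℝ)
    (f' : EuclideanSpace ℝ (Fin d) → EuclideanSpace ℝ (Fin d)) (L η : ℝ) (hL : 0 < L)
    (hdiff : ∀ x, HasGradientAt f (f' x) x)
    (hlip : ∀ x y, ‖f' x - f' y‖ ≤ L * ‖x - y‖) (hη : 0 < η)
    (g x₀ x₁ : EuclideanSpace ℝ (Fin d))
    (hmin : ∀ x, r x₁ + ⟪g, x₁ - x₀⟫ + 1 / (2 * η) * ‖x₁ - x₀‖ ^ 2 ≤
      r x + ⟪g, x - x₀⟫ + 1 / (2 * η) * ‖x - x₀‖ ^ 2) :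
    1 / 2 * (1 / η - 2 * L) * ‖x₁ - x₀‖ ^ 2 ≤
      (f x₀ + r x₀) - (f x₁ + r x₁) + 1 / (2 * L) * ‖g - f' x₀‖ ^ 2 :=
  spg_decrease_with_variance_general f r f' L η hL hdiff hlip g x₀ x₁ hmin
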